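/- If G is a 3-connected simple graph, then the automorphism group of G is isomorphic to the automorphism group of its cycle matroid M(G). -/

import Mathlib

/-- A matroid automorphism, modelled as a permutation of the ambient type that fixes
every point outside the ground set and preserves independence. -/
def IsMAuto {α : Type*} (M : Matroid α) (σ : Equiv.Perm α) : Prop :=
  (∀ x ∉ M.E, σ x = x) ∧ ∀ I : Set α, M.Indep (σ '' I) ↔ M.Indep I

/-- The automorphism group of a matroid, as a subgroup of `Equiv.Perm α`. -/
def matroidAutGroup {α : Type*} (M : Matroid α) : Subgroup (Equiv.Perm α) where
  carrier := {σ | IsMAuto M σ}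
  one_mem' := ⟨fun _ _ => rfl, fun I => by simp⟩
  mul_mem' := by
    rintro σ τ ⟨hσ1, hσ2⟩ ⟨hτ1, hτ2⟩
    refine ⟨fun x hx => ?_, fun I => ?_⟩
    · simp [Equiv.Perm.mul_apply, hτ1 x hx, hσ1 x hx]
    · rw [Equiv.Perm.coe_mul, Set.image_comp, hσ2, hτ2]
  inv_mem' := by
    rintro σ ⟨hσ1, hσ2⟩
    refine ⟨fun x hx => ?_, fun I => ?_⟩
    · have := hσ1 x hx
      simp only [Equiv.Perm.inv_def, Equiv.symm_apply_eq]
      exact this.symm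
    · have h := hσ2 ((σ⁻¹ : Equiv.Perm α) '' I)
      exact (by rwa [Set.image_image, show (fun x => σ (σ⁻¹ x)) = id by
        funext x; simp, Set.image_id] at h : M.Indep I ↔ M.Indep (⇑σ⁻¹ '' I)).symm

/-- A fixing set of a matroid: a subset of the ground set whose pointwise
stabilizer in the automorphism group is trivial. -/
def IsFixingSet {α : Type*} (M : Matroid α) (A : Set α) : Prop :=
  A ⊆ M.E ∧ ∀ σ : Equiv.Perm α, IsMAuto M σ → (∀ a ∈ A, σ a = a) → σ = 1

/-- The fixing number of a matroid: the least size of a fixing set. -/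
noncomputable def fixNum {α : Type*} (M : Matroid α) : ℕ :=
  sInf {k | ∃ A : Set α, IsFixingSet M A ∧ A.Finite ∧ A.ncard = k}

/-- A circuit of a matroid: a minimal dependent subset of the ground set. -/
def MCirc {α : Type*} (M : Matroid α) (C : Set α) : Prop :=
  C ⊆ M.E ∧ ¬ M.Indep C ∧ ∀ D ⊂ C, M.Indep D

/-- The vertex support of a set of edges. -/
def edgeSupp {V : Type*} (C : Set (Sym2 V)) : Set V := {v | ∃ e ∈ C, v ∈ e}

/-- A set of edges is connected if it is nonempty and any two supported vertices are
joined by a walk using only these edges. -/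
def EdgeConn {V : Type*} (C : Set (Sym2 V)) : Prop :=
  C.Nonempty ∧ ∀ u ∈ edgeSupp C, ∀ v ∈ edgeSupp C, (SimpleGraph.fromEdgeSet C).Reachable u v

/-- The edge set of a cycle of the graph `G`. -/
def IsCycleSet {V : Type*} (G : SimpleGraph V) (C : Set (Sym2 V)) : Prop :=
  ∃ (v : V) (w : G.Walk v v), w.IsCycle ∧ C = {e | e ∈ w.edges}

/-- A bicycle of `G`: a minimal connected edge set with more edges than vertices,
equivalently a subdivision of two loops at a vertex, two loops joined by an edge,
or three edges joining the same pair of vertices. -/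
def IsBicycle {V : Type*} (G : SimpleGraph V) (C : Set (Sym2 V)) : Prop :=
  C ⊆ G.edgeSet ∧ C.Finite ∧ EdgeConn C ∧ (edgeSupp C).ncard < C.ncard ∧
    ∀ D ⊂ C, ¬ (EdgeConn D ∧ D.Finite ∧ (edgeSupp D).ncard < D.ncard)

/-- The automorphism group of a simple graph, as a subgroup of `Equiv.Perm V`. -/
def graphAutGroup {V : Type*} (G : SimpleGraph V) : Subgroup (Equiv.Perm V) where
  carrier := {σ | ∀ u v, G.Adj (σ u) (σ v) ↔ G.Adj u v}
  one_mem' := by intro u v; simp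
  mul_mem' := by
    intro σ τ hσ hτ u v
    simp only [Set.mem_setOf_eq, Equiv.Perm.mul_apply] at *
    exact (hσ (τ u) (τ v)).trans (hτ u v)
  inv_mem' := by
    intro σ hσ u v
    have h := (hσ (σ⁻¹ u) (σ⁻¹ v)).symm
    simpa using h

/-- Three-connectivity: more than three vertices, and deleting any fewer than three
vertices leaves a connected graph. -/
def ThreeConnected {V : Type*} [Fintype V] (G : SimpleGraph V) : Prop :=
  4 ≤ Fintype.card V ∧
    ∀ S : Set V, S.ncard < 3 → ((⊤ : G.Subgraph).deleteVerts S).coe.Connected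

/-!
A graph automorphism acts on edges and maps cycles to cycles, hence circuits of `M(G)` to
circuits; since every vertex of a 3-connected graph has two neighbours, the action is faithful.

Conversely, a matroid automorphism permutes the connected hyperplanes of `M(G)`, and in a
3-connected graph these are exactly the complements `E − N(v)` of vertex stars. Indeed, if `A`
is such a hyperplane and `xy ∉ A`, every other edge outside `A` joins the `A`-component of `x`
to that of `y`, which are distinct as `A` is closed; as `A` is connected, one of `x`, `y` meets no
edge of `A`, and `A` is the complement of its star. So the matroid automorphism permutes the
stars, i.e. the vertices, and this permutation is a graph automorphism inducing it.
-/

open Function Set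

theorem Function.Injective.exists_perm_image_eq {ι α : Type*} {S : ι → Set α}
    (hS : Injective S) (t : Equiv.Perm α) (h : ∀ i, ∃ j, t '' S i = S j)
    (h' : ∀ i, ∃ j, ⇑t⁻¹ '' S i = S j) :
    ∃ σ : Equiv.Perm ι, ∀ i, t '' S i = S (σ i) := by
  choose f hf using h
  choose g hg using h'
  have hgf : LeftInverse g f := fun i => hS <| by
    rw [← hg, ← hf, Equiv.Perm.inv_def, Equiv.symm_image_image]
  have hfg : RightInverse g f := fun i => hS <| by
    rw [← hf, ← hg, Equiv.Perm.inv_def, Equiv.image_symm_image]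
  exact ⟨⟨f, g, hgf, hfg⟩, hf⟩

theorem Equiv.Perm.image_inv_iff_of_image_iff {α : Type*} {P : Set α → Prop} {t : Equiv.Perm α}
    (h : ∀ C, P (t '' C) ↔ P C) (C : Set α) : P (⇑t⁻¹ '' C) ↔ P C := by
  rw [← h, Equiv.Perm.inv_def, Equiv.image_symm_image]

section Matroid

variable {α : Type*} {M : Matroid α} {C : Set α}

theorem mcirc_iff_isCircuit : MCirc M C ↔ M.IsCircuit C := by
  rw [Matroid.isCircuit_iff_forall_ssubset, Matroid.Dep, MCirc]
  tauto

theorem isMAuto_iff_isCircuit_image_iff {t : Equiv.Perm α} :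
    IsMAuto M t ↔ (∀ x ∉ M.E, t x = x) ∧ ∀ C, M.IsCircuit (t '' C) ↔ M.IsCircuit C := by
  refine and_congr_right fun hfix => ?_
  have hE : t '' M.E = M.E := Set.image_perm fun x hx => by_contra fun h => hx (hfix x h)
  have hsub : ∀ X, t '' X ⊆ M.E ↔ X ⊆ M.E := fun X => by
    conv_lhs => rw [← hE]
    exact Set.image_subset_image_iff t.injective
  constructor
  · intro hI C
    have hdep : ∀ X, M.Dep (t '' X) ↔ M.Dep X := fun X => by
      rw [Matroid.Dep, Matroid.Dep, hI, hsub]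
    rw [Matroid.isCircuit_iff, Matroid.isCircuit_iff, hdep,
      (Set.image_surjective.2 t.surjective).forall]
    simp only [hdep, Set.image_subset_image_iff t.injective,
      (Set.image_injective.2 t.injective).eq_iff]
  · intro hC I
    rw [Matroid.indep_iff_forall_subset_not_isCircuit',
      Matroid.indep_iff_forall_subset_not_isCircuit', forall_subset_image_iff, hsub]
    simp only [hC]

end Matroid

namespace SimpleGraph

variable {V : Type*} {G : SimpleGraph V} {X Y : Set (Sym2 V)} {a b u v w x y : V}

theorem Walk.reachable_fromEdgeSet {p : G.Walk u w} (hp : ∀ e ∈ p.edges, e ∈ X) :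
    (fromEdgeSet X).Reachable u w :=
  ⟨p.transfer _ fun e he => by
    rw [edgeSet_fromEdgeSet]
    exact ⟨hp e he, G.not_isDiag_of_mem_edgeSet (p.edges_subset_edgeSet he)⟩⟩

theorem Walk.mem_edgeSet_sdiff_incidenceSet_of_mem_edges {p : G.Walk u w}
    (hv : v ∉ p.support) {e : Sym2 V} (he : e ∈ p.edges) : e ∈ G.edgeSet \ G.incidenceSet v :=
  ⟨p.edges_subset_edgeSet he, fun h => hv (p.mem_support_of_mem_edges he h.2)⟩

theorem Walk.exists_adj_mem_support_of_ne (p : G.Walk u w) (huw : u ≠ w) :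
    ∃ z, G.Adj u z ∧ z ∈ p.support :=
  ⟨p.snd, p.adj_snd (not_nil_of_ne huw),
    List.mem_of_mem_tail (p.snd_mem_tail_support (not_nil_of_ne huw))⟩

theorem eq_of_reachable_fromEdgeSet (hv : ∀ e ∈ X, v ∉ e)
    (h : (fromEdgeSet X).Reachable v w) : w = v := by
  by_contra hne
  obtain ⟨p⟩ := h
  obtain ⟨z, hz, -⟩ := p.exists_adj_mem_support_of_ne (Ne.symm hne)
  exact hv _ ((fromEdgeSet_adj _).1 hz).1 (Sym2.mem_mk_left v z)

theorem reachable_fromEdgeSet_of_mem {e : Sym2 V} (he : e ∈ X) (ha : a ∈ e) (hb : b ∈ e) :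
    (fromEdgeSet X).Reachable a b := by
  rcases eq_or_ne a b with rfl | hab
  · rfl
  rw [(Sym2.mem_and_mem_iff hab).1 ⟨ha, hb⟩] at he
  exact ((fromEdgeSet_adj X).2 ⟨he, hab⟩).reachable

theorem exists_isPath_avoiding {S : Set V}
    (hS : ((⊤ : G.Subgraph).deleteVerts S).coe.Connected) (ha : a ∉ S) (hb : b ∉ S) :
    ∃ p : G.Walk a b, p.IsPath ∧ ∀ z ∈ p.support, z ∉ S := by
  classical
  obtain ⟨p⟩ := hS.preconnected ⟨a, trivial, ha⟩ ⟨b, trivial, hb⟩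
  refine ⟨(p.map (Subgraph.hom _)).bypass, Walk.bypass_isPath _, fun z hz => ?_⟩
  obtain ⟨z', -, rfl⟩ :=
    List.mem_map.1 (Walk.support_map _ p ▸ Walk.support_bypass_subset_support _ hz)
  exact z'.2.2

theorem exists_isCycleSet_iff_reachable (hY : Y ⊆ G.edgeSet) (hab : s(a, b) ∈ Y) :
    (∃ C, IsCycleSet G C ∧ C ⊆ Y ∧ s(a, b) ∈ C) ↔
      (fromEdgeSet (Y \ {s(a, b)})).Reachable a b := by
  have hle : fromEdgeSet Y ≤ G := (fromEdgeSet_le G).2 (sdiff_subset.trans hY)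
  have hadj : (fromEdgeSet Y).Adj a b :=
    (fromEdgeSet_adj Y).2 ⟨hab, (G.mem_edgeSet.1 (hY hab)).ne⟩
  rw [← deleteEdges_fromEdgeSet,
    ← and_iff_right hadj (b := ((fromEdgeSet Y).deleteEdges _).Reachable a b),
    adj_and_reachable_delete_edges_iff_exists_cycle]
  constructor
  · rintro ⟨C, ⟨r, w, hw, rfl⟩, hCY, hf⟩
    have hwY : ∀ e ∈ w.edges, e ∈ (fromEdgeSet Y).edgeSet := fun e he => by
      rw [edgeSet_fromEdgeSet]
      exact ⟨hCY he, G.not_isDiag_of_mem_edgeSet (w.edges_subset_edgeSet he)⟩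
    exact ⟨r, w.transfer _ hwY, hw.transfer hwY, by rwa [Walk.edges_transfer]⟩
  · rintro ⟨r, p, hp, hf⟩
    refine ⟨_, ⟨r, p.mapLe hle, hp.mapLe hle, rfl⟩, fun e he => ?_, ?_⟩
    · rw [mem_ofPred_eq, Walk.edges_mapLe_eq_edges] at he
      exact ((edgeSet_fromEdgeSet Y) ▸ p.edges_subset_edgeSet he).1
    · rwa [mem_ofPred_eq, Walk.edges_mapLe_eq_edges]

theorem reachable_fromEdgeSet_insert (h : (fromEdgeSet (insert s(x, y) X)).Reachable u w) :
    (fromEdgeSet X).Reachable u w ∨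
      (((fromEdgeSet X).Reachable x u ∨ (fromEdgeSet X).Reachable y u) ∧
        ((fromEdgeSet X).Reachable x w ∨ (fromEdgeSet X).Reachable y w)) := by
  set R := (fromEdgeSet X).Reachable
  rw [reachable_iff_reflTransGen] at h
  induction h with
  | refl => exact Or.inl (Reachable.refl u)
  | @tail z w _ hzw ih =>
    obtain ⟨hzw | hzw, -⟩ := (fromEdgeSet_adj _).1 hzw
    · have hx : R x x := Reachable.refl x
      have hy : R y y := Reachable.refl y
      rcases Sym2.eq_iff.1 hzw with ⟨rfl, rfl⟩ | ⟨rfl, rfl⟩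
      · exact Or.inr ⟨ih.elim (fun h => Or.inl h.symm) And.left, Or.inr hy⟩
      · exact Or.inr ⟨ih.elim (fun h => Or.inr h.symm) And.left, Or.inl hx⟩
    · have hzw : R z w := reachable_fromEdgeSet_of_mem hzw (Sym2.mem_mk_left z w)
        (Sym2.mem_mk_right z w)
      exact ih.imp (·.trans hzw) fun ⟨hu, hz⟩ => ⟨hu, hz.imp (·.trans hzw) (·.trans hzw)⟩

theorem _root_.IsCycleSet.reachable_fromEdgeSet {C : Set (Sym2 V)} (hC : IsCycleSet G C)
    (hCX : C ⊆ X) {e f : Sym2 V} (he : e ∈ C) (hf : f ∈ C) (ha : a ∈ e) (hb : b ∈ f) :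
    (fromEdgeSet X).Reachable a b := by
  classical
  obtain ⟨r, p, -, rfl⟩ := hC
  have hr : ∀ z ∈ p.support, (fromEdgeSet X).Reachable r z := fun z hz =>
    Walk.reachable_fromEdgeSet fun e he => hCX (p.edges_takeUntil_subset_edges hz he)
  exact (hr a (p.mem_support_of_mem_edges he ha)).symm.trans
    (hr b (p.mem_support_of_mem_edges hf hb))

theorem Walk.isCycle_cons_concat {c : V} {p : G.Walk a b} (hp : p.IsPath) (hc : c ∉ p.support)
    (hca : G.Adj c a) (hbc : G.Adj b c) (hab : a ≠ b) :
    (Walk.cons hca (p.concat hbc)).IsCycle := by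
  refine (Walk.cons_isCycle_iff _ _).2 ⟨hp.concat hc hbc, fun h => ?_⟩
  rw [Walk.edges_concat, List.concat_eq_append, List.mem_append, List.mem_singleton] at h
  rcases h with h | h
  · exact hc (p.fst_mem_support_of_mem_edges h)
  · rcases Sym2.eq_iff.1 h with ⟨rfl, -⟩ | ⟨-, rfl⟩
    · exact hbc.ne rfl
    · exact hab rfl

def cycleClosure (G : SimpleGraph V) (X : Set (Sym2 V)) : Set (Sym2 V) :=
  X ∪ {f | ∃ C, IsCycleSet G C ∧ C ⊆ insert f X ∧ f ∈ C}

theorem subset_cycleClosure : X ⊆ G.cycleClosure X := subset_union_left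

theorem mem_cycleClosure_iff_reachable (hX : X ⊆ G.edgeSet) (hab : G.Adj a b)
    (hX' : s(a, b) ∉ X) : s(a, b) ∈ G.cycleClosure X ↔ (fromEdgeSet X).Reachable a b := by
  have hY : insert s(a, b) X ⊆ G.edgeSet := insert_subset hab hX
  have h := exists_isCycleSet_iff_reachable hY (mem_insert _ _)
  rw [insert_sdiff_self_of_notMem hX'] at h
  rw [cycleClosure, mem_union, or_iff_right hX', mem_ofPred_eq, h]

theorem image_cycleClosure {t : Equiv.Perm (Sym2 V)}
    (ht : ∀ C, IsCycleSet G (t '' C) ↔ IsCycleSet G C) (X : Set (Sym2 V)) :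
    t '' G.cycleClosure X = G.cycleClosure (t '' X) := by
  ext g
  obtain ⟨f, rfl⟩ := t.surjective g
  simp only [cycleClosure, mem_union, mem_ofPred_eq, t.injective.mem_set_image]
  refine or_congr_right ⟨fun ⟨C, hC, hCX, hfC⟩ => ?_, fun ⟨D, hD, hDX, hfD⟩ => ?_⟩
  · exact ⟨t '' C, (ht C).2 hC, by rw [← image_insert_eq]; exact image_mono hCX,
      mem_image_of_mem _ hfC⟩
  · obtain ⟨C, rfl⟩ := Set.image_surjective.2 t.surjective D
    rw [← image_insert_eq, image_subset_image_iff t.injective] at hDX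
    exact ⟨C, (ht C).1 hD, hDX, t.injective.mem_set_image.1 hfD⟩

def CycleLinked (G : SimpleGraph V) (A : Set (Sym2 V)) (e f : Sym2 V) : Prop :=
  ∃ C, IsCycleSet G C ∧ C ⊆ A ∧ e ∈ C ∧ f ∈ C

/-- A connected hyperplane of the cycle matroid of `G`, phrased through cycles alone so that
any permutation of the edges preserving the cycles carries it along. -/
structure IsConnectedHyperplane (G : SimpleGraph V) (A : Set (Sym2 V)) : Prop where
  subset_edgeSet : A ⊆ G.edgeSet
  exists_mem_notMem : ∃ e ∈ G.edgeSet, e ∉ A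
  notMem_cycleClosure : ∀ e ∈ G.edgeSet, e ∉ A → e ∉ G.cycleClosure A
  edgeSet_subset_cycleClosure :
    ∀ e ∈ G.edgeSet, e ∉ A → G.edgeSet ⊆ G.cycleClosure (insert e A)
  linked : ∀ e ∈ A, ∀ f ∈ A, Relation.ReflTransGen (G.CycleLinked A) e f

variable {A : Set (Sym2 V)}

theorem IsConnectedHyperplane.image (hA : G.IsConnectedHyperplane A)
    {t : Equiv.Perm (Sym2 V)} (hE : t '' G.edgeSet = G.edgeSet)
    (ht : ∀ C, IsCycleSet G (t '' C) ↔ IsCycleSet G C) :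
    G.IsConnectedHyperplane (t '' A) where
  subset_edgeSet := hE ▸ image_mono hA.subset_edgeSet
  exists_mem_notMem := by
    obtain ⟨e, he, heA⟩ := hA.exists_mem_notMem
    exact ⟨t e, hE ▸ mem_image_of_mem t he, t.injective.mem_set_image.not.2 heA⟩
  notMem_cycleClosure := by
    rw [← hE, ← image_cycleClosure ht]
    rintro _ ⟨e, he, rfl⟩ heA
    rw [t.injective.mem_set_image] at heA ⊢
    exact hA.notMem_cycleClosure e he heA
  edgeSet_subset_cycleClosure := by
    rw [← hE]
    rintro _ ⟨e, he, rfl⟩ heA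
    rw [← image_insert_eq, ← image_cycleClosure ht]
    exact image_mono (hA.edgeSet_subset_cycleClosure e he (heA ∘ mem_image_of_mem t))
  linked := by
    rintro _ ⟨e, he, rfl⟩ _ ⟨f, hf, rfl⟩
    refine (hA.linked e he f hf).lift t fun a b ⟨C, hC, hCA, ha, hb⟩ => ?_
    exact ⟨t '' C, (ht C).2 hC, image_mono hCA, mem_image_of_mem t ha, mem_image_of_mem t hb⟩

theorem reachable_fromEdgeSet_compl_incidenceSet
    (hconn : ((⊤ : G.Subgraph).deleteVerts {v}).coe.Connected) (ha : a ≠ v) (hb : b ≠ v) :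
    (fromEdgeSet (G.edgeSet \ G.incidenceSet v)).Reachable a b := by
  obtain ⟨p, -, hp⟩ := exists_isPath_avoiding hconn (by simpa using ha) (by simpa using hb)
  exact Walk.reachable_fromEdgeSet fun e =>
    Walk.mem_edgeSet_sdiff_incidenceSet_of_mem_edges fun h => hp v h rfl

theorem reflTransGen_cycleLinked_of_mem_of_mem
    (hconn : ∀ u v : V, ((⊤ : G.Subgraph).deleteVerts {u, v}).coe.Connected) {c : V}
    {e f : Sym2 V} (he : e ∈ G.edgeSet \ G.incidenceSet v)
    (hf : f ∈ G.edgeSet \ G.incidenceSet v) (hce : c ∈ e) (hcf : c ∈ f) :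
    Relation.ReflTransGen (G.CycleLinked (G.edgeSet \ G.incidenceSet v)) e f := by
  rcases eq_or_ne e f with rfl | hef
  · rfl
  obtain ⟨b, rfl⟩ := Sym2.mem_iff_exists.1 hce
  obtain ⟨d, rfl⟩ := Sym2.mem_iff_exists.1 hcf
  have hcb : G.Adj c b := he.1
  have hcd : G.Adj c d := hf.1
  have hbd : b ≠ d := by rintro rfl; exact hef rfl
  have hvb : v ∉ s(c, b) := fun h => he.2 ⟨he.1, h⟩
  have hvd : v ∉ s(c, d) := fun h => hf.2 ⟨hf.1, h⟩
  have hb : b ∉ ({v, c} : Set V) := by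
    simp only [mem_insert_iff, mem_singleton_iff, not_or]
    exact ⟨fun h => hvb (h ▸ Sym2.mem_mk_right c b), hcb.ne'⟩
  have hd : d ∉ ({v, c} : Set V) := by
    simp only [mem_insert_iff, mem_singleton_iff, not_or]
    exact ⟨fun h => hvd (h ▸ Sym2.mem_mk_right c d), hcd.ne'⟩
  obtain ⟨p, hp, hpS⟩ := exists_isPath_avoiding (hconn v c) hb hd
  have hcp : c ∉ p.support := fun h => hpS c h (by simp)
  refine .single ⟨_, ⟨c, _, Walk.isCycle_cons_concat hp hcp hcb hcd.symm hbd, rfl⟩,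
    fun g hg => ?_, by simp, by simp [Sym2.eq_swap]⟩
  simp only [mem_ofPred_eq, Walk.edges_cons, Walk.edges_concat, List.concat_eq_append,
    List.mem_cons, List.mem_append, List.not_mem_nil, or_false] at hg
  rcases hg with rfl | hg | rfl
  · exact he
  · exact Walk.mem_edgeSet_sdiff_incidenceSet_of_mem_edges (fun h => hpS v h (by simp)) hg
  · rwa [Sym2.eq_swap]

theorem isConnectedHyperplane_compl_incidenceSet
    (hconn : ∀ u v : V, ((⊤ : G.Subgraph).deleteVerts {u, v}).coe.Connected)
    (hv : (G.neighborSet v).Nonempty) :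
    G.IsConnectedHyperplane (G.edgeSet \ G.incidenceSet v) := by
  have hconn₁ : ((⊤ : G.Subgraph).deleteVerts {v}).coe.Connected :=
    pair_eq_singleton v ▸ hconn v v
  have hstar : ∀ e ∈ G.edgeSet, e ∉ G.edgeSet \ G.incidenceSet v →
      ∃ u, e = s(v, u) ∧ G.Adj v u := fun e he heA => by
    obtain ⟨u, rfl⟩ := Sym2.mem_iff_exists.1 (by_contra fun h => heA ⟨he, fun h' => h h'.2⟩)
    exact ⟨u, rfl, he⟩
  have hisol : ∀ e ∈ G.edgeSet \ G.incidenceSet v, v ∉ e := fun e he h => he.2 ⟨he.1, h⟩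
  refine ⟨sdiff_subset, ?_, ?_, ?_, ?_⟩
  · obtain ⟨u, hu⟩ := hv
    exact ⟨s(v, u), hu, fun h => h.2 ⟨hu, Sym2.mem_mk_left v u⟩⟩
  · intro e he heA
    obtain ⟨u, rfl, hu⟩ := hstar e he heA
    rw [mem_cycleClosure_iff_reachable sdiff_subset hu heA]
    exact fun h => hu.ne (eq_of_reachable_fromEdgeSet hisol h).symm
  · intro e he heA f hf
    by_cases hfA : f ∈ insert e (G.edgeSet \ G.incidenceSet v)
    · exact subset_cycleClosure hfA
    obtain ⟨u, rfl, hu⟩ := hstar e he heA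
    obtain ⟨w, rfl, hw⟩ := hstar f hf fun h => hfA (mem_insert_of_mem _ h)
    rw [mem_cycleClosure_iff_reachable (insert_subset he sdiff_subset) hw hfA]
    exact (reachable_fromEdgeSet_of_mem (mem_insert _ _) (Sym2.mem_mk_left v u)
      (Sym2.mem_mk_right v u)).trans <|
      (reachable_fromEdgeSet_compl_incidenceSet hconn₁ hu.ne' hw.ne').mono
        (fromEdgeSet_mono (subset_insert _ _))
  · intro e he f hf
    obtain ⟨a, ha⟩ : ∃ a, a ∈ e := ⟨_, e.out_fst_mem⟩
    obtain ⟨c, hc⟩ : ∃ c, c ∈ f := ⟨_, f.out_fst_mem⟩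
    have hR := reachable_fromEdgeSet_compl_incidenceSet hconn₁ (a := a) (b := c)
      (fun h => hisol e he (h ▸ ha)) (fun h => hisol f hf (h ▸ hc))
    rw [reachable_iff_reflTransGen] at hR
    induction hR generalizing f with
    | refl => exact reflTransGen_cycleLinked_of_mem_of_mem hconn he hf ha hc
    | @tail z w _ hzw ih =>
      obtain ⟨hzwA, -⟩ := (fromEdgeSet_adj _).1 hzw
      exact (ih _ hzwA (Sym2.mem_mk_left z w)).trans
        (reflTransGen_cycleLinked_of_mem_of_mem hconn hzwA hf (Sym2.mem_mk_right z w) hc)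

namespace IsConnectedHyperplane

theorem not_reachable (hA : G.IsConnectedHyperplane A) (hab : G.Adj a b) (habA : s(a, b) ∉ A) :
    ¬ (fromEdgeSet A).Reachable a b :=
  (mem_cycleClosure_iff_reachable hA.subset_edgeSet hab habA).not.1
    (hA.notMem_cycleClosure _ hab habA)

theorem reachable_of_mem (hA : G.IsConnectedHyperplane A) {e f : Sym2 V} (he : e ∈ A)
    (hf : f ∈ A) {c d : V} (hc : c ∈ e) (hd : d ∈ f) : (fromEdgeSet A).Reachable c d := by
  induction hA.linked e he f hf generalizing d with
  | refl => exact reachable_fromEdgeSet_of_mem he hc hd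
  | @tail g f _ hgf ih =>
    obtain ⟨C, hC, hCA, hgC, hfC⟩ := hgf
    exact (ih (hCA hgC) g.out_fst_mem).trans
      (hC.reachable_fromEdgeSet hCA hgC hfC g.out_fst_mem hd)

theorem reachable_ends (hA : G.IsConnectedHyperplane A) (hxy : G.Adj x y) (hxyA : s(x, y) ∉ A)
    (hab : G.Adj a b) (habA : s(a, b) ∉ A) :
    ((fromEdgeSet A).Reachable x a ∧ (fromEdgeSet A).Reachable y b) ∨
      ((fromEdgeSet A).Reachable x b ∧ (fromEdgeSet A).Reachable y a) := by
  have hspan := hA.edgeSet_subset_cycleClosure _ hxy hxyA (G.mem_edgeSet.2 hab)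
  by_cases hab' : s(a, b) ∈ insert s(x, y) A
  · rcases Sym2.eq_iff.1 ((mem_insert_iff.1 hab').resolve_right habA) with
      ⟨rfl, rfl⟩ | ⟨rfl, rfl⟩
    · exact Or.inl ⟨.rfl, .rfl⟩
    · exact Or.inr ⟨.rfl, .rfl⟩
  rw [mem_cycleClosure_iff_reachable (insert_subset hxy hA.subset_edgeSet) hab hab'] at hspan
  have hnab := hA.not_reachable hab habA
  rcases reachable_fromEdgeSet_insert hspan with h | ⟨ha | ha, hb | hb⟩
  · exact absurd h hnab
  · exact absurd (ha.symm.trans hb) hnab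
  · exact Or.inl ⟨ha, hb⟩
  · exact Or.inr ⟨hb, ha⟩
  · exact absurd (ha.symm.trans hb) hnab

theorem eq_compl_incidenceSet (hA : G.IsConnectedHyperplane A) (hxy : G.Adj x y)
    (hxyA : s(x, y) ∉ A) (hy : ∀ e ∈ A, y ∉ e) : A = G.edgeSet \ G.incidenceSet y := by
  ext e
  refine ⟨fun he => ⟨hA.subset_edgeSet he, fun h => hy e he h.2⟩, fun ⟨he, hey⟩ => ?_⟩
  by_contra heA
  induction e using Sym2.ind with | h a b => ?_
  rcases hA.reachable_ends hxy hxyA he heA with ⟨-, hb⟩ | ⟨-, ha⟩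
  · exact hey ⟨he, eq_of_reachable_fromEdgeSet hy hb ▸ Sym2.mem_mk_right a b⟩
  · exact hey ⟨he, eq_of_reachable_fromEdgeSet hy ha ▸ Sym2.mem_mk_left a b⟩

theorem exists_eq_compl_incidenceSet (hA : G.IsConnectedHyperplane A) :
    ∃ v, A = G.edgeSet \ G.incidenceSet v := by
  obtain ⟨e, he, heA⟩ := hA.exists_mem_notMem
  induction e using Sym2.ind with | h x y => ?_
  by_cases hy : ∃ f ∈ A, y ∈ f
  · obtain ⟨f, hf, hyf⟩ := hy
    refine ⟨x, hA.eq_compl_incidenceSet he.symm (Sym2.eq_swap ▸ heA) fun e he' hxe => ?_⟩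
    exact hA.not_reachable he heA (hA.reachable_of_mem he' hf hxe hyf)
  · exact ⟨y, hA.eq_compl_incidenceSet he heA fun f hf hyf => hy ⟨f, hf, hyf⟩⟩

end IsConnectedHyperplane

theorem incidenceSet_injective (hnbr : ∀ v, (G.neighborSet v).Nontrivial) :
    Function.Injective G.incidenceSet := by
  intro v w h
  by_contra hvw
  have hw : ∀ c, G.Adj v c → c = w := fun c hc => by
    have hcw : s(v, c) ∈ G.incidenceSet w := h ▸ ⟨hc, Sym2.mem_mk_left v c⟩
    exact (Sym2.mem_iff.1 hcw.2).resolve_left (Ne.symm hvw) |>.symm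
  obtain ⟨a, ha, b, hb, hab⟩ := hnbr v
  exact hab ((hw a ha).trans (hw b hb).symm)

theorem neighborSet_nontrivial [Fintype V] (hcard : 3 ≤ Fintype.card V)
    (hconn : ∀ u v : V, ((⊤ : G.Subgraph).deleteVerts {u, v}).coe.Connected) (v : V) :
    (G.neighborSet v).Nontrivial := by
  classical
  have hthird : ∀ x y : V, ∃ z, z ≠ x ∧ z ≠ y := fun x y => by
    obtain ⟨z, -, hz⟩ := Finset.exists_mem_notMem_of_card_lt_card (s := {x, y})
      (t := Finset.univ) ((Finset.card_le_two).trans_lt (by rw [Finset.card_univ]; omega))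
    exact ⟨z, by simpa [not_or] using hz⟩
  have hnbr : ∀ a, a ≠ v → ∃ z, G.Adj v z ∧ z ≠ a := fun a hav => by
    obtain ⟨w, hwv, hwa⟩ := hthird v a
    obtain ⟨p, -, hp⟩ := exists_isPath_avoiding (hconn a a) (b := w) (by simpa using hav.symm)
      (by simpa using hwa)
    obtain ⟨z, hz, hzp⟩ := p.exists_adj_mem_support_of_ne hwv.symm
    exact ⟨z, hz, fun h => hp z hzp (by simp [h])⟩
  obtain ⟨u, hu, -⟩ := hthird v v
  obtain ⟨a, ha, -⟩ := hnbr u hu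
  obtain ⟨b, hb, hba⟩ := hnbr a ha.ne'
  exact ⟨a, ha, b, hb, hba.symm⟩

open Classical in
/-- Extended by the identity off `G.edgeSet`, as `IsMAuto` requires. -/
noncomputable def autEdgePerm (G : SimpleGraph V) : graphAutGroup G →* Equiv.Perm (Sym2 V) :=
  MonoidHom.mk' (fun σ => .ofSubtype (Iso.mapEdgeSet (⟨σ.1, σ.2 _ _⟩ : G ≃g G))) <| by
    intro σ τ
    rw [← map_mul]
    congr 1
    ext ⟨e, he⟩
    induction e using Sym2.ind
    rfl

section Action

variable (σ : graphAutGroup G)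

theorem autEdgePerm_apply_of_mem {e : Sym2 V} (he : e ∈ G.edgeSet) :
    G.autEdgePerm σ e = Sym2.map σ.1 e := by
  classical exact Equiv.Perm.ofSubtype_apply_of_mem _ he

theorem autEdgePerm_apply_of_notMem {e : Sym2 V} (he : e ∉ G.edgeSet) :
    G.autEdgePerm σ e = e := by
  classical exact Equiv.Perm.ofSubtype_apply_of_not_mem _ he

theorem autEdgePerm_apply_mk (huv : G.Adj u v) : G.autEdgePerm σ s(u, v) = s(σ.1 u, σ.1 v) :=
  autEdgePerm_apply_of_mem σ huv

theorem isCycleSet_image_autEdgePerm {C : Set (Sym2 V)} (hC : IsCycleSet G C) :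
    IsCycleSet G (G.autEdgePerm σ '' C) := by
  obtain ⟨r, w, hw, rfl⟩ := hC
  let F : G ≃g G := ⟨σ.1, σ.2 _ _⟩
  refine ⟨σ.1 r, w.map F.toHom, hw.map F.injective, ?_⟩
  ext e
  simp only [mem_image, mem_ofPred_eq, Walk.edges_map, List.mem_map]
  refine exists_congr fun f => and_congr_right fun hf => ?_
  rw [autEdgePerm_apply_of_mem σ (w.edges_subset_edgeSet hf)]
  rfl

theorem isCycleSet_image_autEdgePerm_iff (C : Set (Sym2 V)) :
    IsCycleSet G (G.autEdgePerm σ '' C) ↔ IsCycleSet G C := by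
  refine ⟨fun hC => ?_, isCycleSet_image_autEdgePerm σ⟩
  have h := isCycleSet_image_autEdgePerm σ⁻¹ hC
  rwa [map_inv, Equiv.Perm.inv_def, Equiv.symm_image_image] at h

end Action

theorem autEdgePerm_injective (hnbr : ∀ v, (G.neighborSet v).Nontrivial) :
    Function.Injective G.autEdgePerm := by
  refine (injective_iff_map_eq_one _).2 fun σ hσ => Subtype.ext <| Equiv.ext fun v => ?_
  have hfix : ∀ w, G.Adj v w → σ.1 v = v ∨ σ.1 v = w := fun w hvw => by
    have h := autEdgePerm_apply_mk σ hvw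
    rw [hσ, Equiv.Perm.one_apply] at h
    exact Sym2.mem_iff.1 (h ▸ Sym2.mem_mk_left _ _)
  obtain ⟨a, ha, b, hb, hab⟩ := hnbr v
  rcases hfix a ha with h | ha'
  · exact h
  rcases hfix b hb with h | hb'
  · exact h
  exact absurd (ha'.symm.trans hb') hab

theorem adj_iff_ne_and_incidenceSet_inter_nonempty :
    G.Adj u v ↔ u ≠ v ∧ (G.incidenceSet u ∩ G.incidenceSet v).Nonempty := by
  by_cases huv : G.Adj u v
  · simp [huv, huv.ne, G.incidenceSet_inter_incidenceSet_of_adj huv]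
  · rcases eq_or_ne u v with rfl | hne
    · simp
    · simp [huv, G.incidenceSet_inter_incidenceSet_of_not_adj huv hne]

theorem exists_autEdgePerm_eq_of_image_incidenceSet {t : Equiv.Perm (Sym2 V)}
    (hfix : ∀ e ∉ G.edgeSet, t e = e) (σ : Equiv.Perm V)
    (hσ : ∀ v, t '' G.incidenceSet v = G.incidenceSet (σ v)) :
    ∃ τ, G.autEdgePerm τ = t := by
  have hinter : ∀ u v, t '' (G.incidenceSet u ∩ G.incidenceSet v) =
      G.incidenceSet (σ u) ∩ G.incidenceSet (σ v) := fun u v => by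
    rw [image_inter t.injective, hσ, hσ]
  have hadj : ∀ u v, G.Adj (σ u) (σ v) ↔ G.Adj u v := fun u v => by
    rw [adj_iff_ne_and_incidenceSet_inter_nonempty, adj_iff_ne_and_incidenceSet_inter_nonempty,
      ← hinter, image_nonempty, σ.injective.ne_iff]
  refine ⟨⟨σ, hadj⟩, Equiv.ext fun e => ?_⟩
  by_cases he : e ∈ G.edgeSet
  · induction e using Sym2.ind with | h u v => ?_
    have h := hinter u v
    rw [G.incidenceSet_inter_incidenceSet_of_adj he,
      G.incidenceSet_inter_incidenceSet_of_adj ((hadj u v).2 he), image_singleton,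
      singleton_eq_singleton_iff] at h
    rw [autEdgePerm_apply_mk _ he, h]
  · rw [autEdgePerm_apply_of_notMem _ he, hfix e he]

theorem exists_image_incidenceSet_eq
    (hconn : ∀ u v : V, ((⊤ : G.Subgraph).deleteVerts {u, v}).coe.Connected)
    (hv : (G.neighborSet v).Nonempty) {t : Equiv.Perm (Sym2 V)}
    (hfix : ∀ e ∉ G.edgeSet, t e = e) (ht : ∀ C, IsCycleSet G (t '' C) ↔ IsCycleSet G C) :
    ∃ w, t '' G.incidenceSet v = G.incidenceSet w := by
  have hE : t '' G.edgeSet = G.edgeSet := image_perm fun e he => by_contra fun h => he (hfix e h)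
  obtain ⟨w, hw⟩ := ((isConnectedHyperplane_compl_incidenceSet hconn hv).image hE
    ht).exists_eq_compl_incidenceSet
  rw [image_sdiff t.injective, hE] at hw
  have hsub : t '' G.incidenceSet v ⊆ G.edgeSet := hE ▸ image_mono (G.incidenceSet_subset v)
  refine ⟨w, ?_⟩
  rw [← sdiff_sdiff_cancel_left hsub, hw, sdiff_sdiff_cancel_left (G.incidenceSet_subset w)]

theorem exists_autEdgePerm_eq
    (hconn : ∀ u v : V, ((⊤ : G.Subgraph).deleteVerts {u, v}).coe.Connected)
    (hnbr : ∀ v, (G.neighborSet v).Nontrivial) {t : Equiv.Perm (Sym2 V)}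
    (hfix : ∀ e ∉ G.edgeSet, t e = e) (ht : ∀ C, IsCycleSet G (t '' C) ↔ IsCycleSet G C) :
    ∃ τ, G.autEdgePerm τ = t := by
  have hfix' : ∀ e ∉ G.edgeSet, t⁻¹ e = e := fun e he => by
    rw [Equiv.Perm.inv_eq_iff_eq, hfix e he]
  obtain ⟨σ, hσ⟩ := (incidenceSet_injective hnbr).exists_perm_image_eq t
    (fun v => exists_image_incidenceSet_eq hconn (hnbr v).nonempty hfix ht)
    (fun v => exists_image_incidenceSet_eq hconn (hnbr v).nonempty hfix'
      (Equiv.Perm.image_inv_iff_of_image_iff ht))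
  exact exists_autEdgePerm_eq_of_image_incidenceSet hfix σ hσ

end SimpleGraph

open SimpleGraph

theorem mem_matroidAutGroup_iff {V : Type*} {G : SimpleGraph V} {M : Matroid (Sym2 V)}
    (hE : M.E = G.edgeSet) (hC : ∀ C, MCirc M C ↔ IsCycleSet G C) {t : Equiv.Perm (Sym2 V)} :
    t ∈ matroidAutGroup M ↔
      (∀ e ∉ G.edgeSet, t e = e) ∧ ∀ C, IsCycleSet G (t '' C) ↔ IsCycleSet G C := by
  simp only [← hC, mcirc_iff_isCircuit, ← hE]
  exact isMAuto_iff_isCircuit_image_iff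

/-- If `G` is a 3-connected simple graph, then `Aut(G)` is isomorphic to the
automorphism group of its cycle matroid `M(G)`. -/
theorem stmt14 {V : Type*} [Fintype V] (G : SimpleGraph V)
    (h3 : ThreeConnected G)
    (M : Matroid (Sym2 V)) (hE : M.E = G.edgeSet)
    (hC : ∀ C : Set (Sym2 V), MCirc M C ↔ IsCycleSet G C) :
    Nonempty (graphAutGroup G ≃* matroidAutGroup M) := by
  obtain ⟨hcard, hdel⟩ := h3
  have hconn : ∀ u v : V, ((⊤ : G.Subgraph).deleteVerts {u, v}).coe.Connected := fun u v =>
    hdel _ ((Set.ncard_insert_le u {v}).trans_lt (by simp))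
  have hnbr := neighborSet_nontrivial (by omega) hconn
  let φ := G.autEdgePerm.codRestrict (matroidAutGroup M) fun σ =>
    (mem_matroidAutGroup_iff hE hC).2
      ⟨fun _ => autEdgePerm_apply_of_notMem σ, isCycleSet_image_autEdgePerm_iff σ⟩
  refine ⟨MulEquiv.ofBijective φ ⟨fun σ τ h => autEdgePerm_injective hnbr congr(($h).1),
    fun t => ?_⟩⟩
  obtain ⟨hfix, ht⟩ := (mem_matroidAutGroup_iff hE hC).1 t.2
  obtain ⟨τ, hτ⟩ := exists_autEdgePerm_eq hconn hnbr hfix ht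
  exact ⟨τ, Subtype.ext hτ⟩
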